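/- Let A = [A_{ij}] be an N×N block real matrix with blocks A_{ij} ∈ ℝ^{n_i×n_j}, and let B = diag(B_{11},…,B_{NN}) be block diagonal with B_{ii} ∈ ℝ^{n_i×p_i}. Suppose there exist symmetric positive definite matrices M_i ∈ ℝ^{n_i×n_i} and matrices L_{ij} ∈ ℝ^{p_i×n_j} such that, defining the symmetric block matrix W = [W_{ij}] by W_{ij} := −M_i A_{ji}ᵀ − A_{ij} M_j − L_{ji}ᵀ B_{jj}ᵀ − B_{ii} L_{ij}, the diagonal pivots Ŵ_{ii} of the block Cholesky recursion applied to W are positive definite for all i = 1,…,N. Then A + BK is Hurwitz, where K = [K_{ij}] is the block matrix with blocks K_{ij} = L_{ij} M_j⁻¹ (equivalently K = L M⁻¹ with L = [L_{ij}], M = diag(M_1,…,M_N)). -/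

import Mathlib

/-!
With `P = diag(M_i)` and `K = L P⁻¹`, the closed-loop matrix `S = A + B K` satisfies the
Lyapunov equation `S P + P Sᵀ = -W`, where `W` is the full block matrix `[W_ij]`.
The block Cholesky recursion is a block `LDLᵀ` factorisation `W = T D Tᵀ` with `T` block unit
lower triangular and `D = diag(Ŵ_ii)`, so `W ≻ 0` as soon as all the pivots are.
If `λ` is an eigenvalue of `S`, a left eigenvector `v` gives `2 Re λ · v*Pv = -v*Wv`,
hence `Re λ < 0`.
-/

open Matrix

/-- The full matrix assembled from an `N × N` family of (possibly rectangular)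
blocks (`W i j` is the `(i,j)`-th block, of size `n i × m j`). -/
def ofBlocks {N : ℕ} {n m : Fin N → ℕ}
    (W : ∀ i j : Fin N, Matrix (Fin (n i)) (Fin (m j)) ℝ) :
    Matrix ((i : Fin N) × Fin (n i)) ((j : Fin N) × Fin (m j)) ℝ :=
  Matrix.of fun a b => W a.1 b.1 a.2 b.2

/-- The block diagonal matrix with diagonal blocks `Bd i` (of size `n i × p i`)
and zero off-diagonal blocks. -/
def blockDiagMat {N : ℕ} {n p : Fin N → ℕ}
    (Bd : ∀ i : Fin N, Matrix (Fin (n i)) (Fin (p i)) ℝ) :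
    Matrix ((i : Fin N) × Fin (n i)) ((j : Fin N) × Fin (p j)) ℝ :=
  Matrix.of fun a b =>
    if h : a.1 = b.1 then Bd a.1 a.2 (Fin.cast (congrArg p h).symm b.2) else 0

/-- The block Cholesky recursion:
`Ŵ i j = W i j − Σ_{k < j} Ŵ i k ⬝ (Ŵ k k)⁻¹ ⬝ (Ŵ j k)ᵀ`. -/
noncomputable def chol {N : ℕ} {n : Fin N → ℕ}
    (W : ∀ i j : Fin N, Matrix (Fin (n i)) (Fin (n j)) ℝ)
    (i j : Fin N) : Matrix (Fin (n i)) (Fin (n j)) ℝ :=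
  W i j - ∑ k : Fin N,
    if h : (k : ℕ) < (j : ℕ) then
      chol W i k * (chol W k k)⁻¹ * (chol W j k)ᵀ
    else 0
termination_by (j : ℕ)
decreasing_by all_goals exact h

/-- A real square matrix is Hurwitz if every root in `ℂ` of its characteristic
polynomial has strictly negative real part. -/
def IsHurwitz {I : Type*} [Fintype I] [DecidableEq I] (A : Matrix I I ℝ) : Prop :=
  ∀ z : ℂ, ((A.map (Complex.ofReal)).charpoly).IsRoot z → z.re < 0


open scoped ComplexOrder

namespace Matrix

section Lyapunov

variable {I : Type*} [Fintype I]

theorem PosDef.map_ofReal [DecidableEq I] {P : Matrix I I ℝ} (hP : P.PosDef) :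
    (P.map ((↑) : ℝ → ℂ)).PosDef := by
  set U : Matrix I I ℝ := (hP.1.eigenvectorUnitary : Matrix I I ℝ)
  have hU : IsUnit (U.map ((↑) : ℝ → ℂ)) :=
    (Unitary.isUnit_coe (U := hP.1.eigenvectorUnitary)).map Complex.ofRealHom.mapMatrix
  have hPU : P.map ((↑) : ℝ → ℂ) =
      U.map (↑) * diagonal (fun i => (hP.1.eigenvalues i : ℂ)) * star (U.map (↑)) := by
    conv_lhs => rw [hP.1.spectral_theorem, Unitary.conjStarAlgAut_apply]
    ext i j
    simp [U, mul_apply, diagonal_apply, star_apply]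
  rw [hPU, hU.posDef_star_right_conjugate_iff, posDef_diagonal_iff]
  exact fun i => mod_cast hP.eigenvalues_pos i

theorem re_lt_zero_of_lyapunov {S P W : Matrix I I ℂ} (hP : P.PosDef) (hW : W.PosDef)
    (hSPW : Sᴴ * P + P * S = -W) {z : ℂ} {v : I → ℂ} (hv : v ≠ 0) (hSv : S *ᵥ v = z • v) :
    z.re < 0 := by
  have hleft : star v ⬝ᵥ (Sᴴ *ᵥ (P *ᵥ v)) = starRingEnd ℂ z * (star v ⬝ᵥ (P *ᵥ v)) := by
    rw [dotProduct_mulVec (star v) Sᴴ, ← star_mulVec, hSv, star_smul, smul_dotProduct]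
    rfl
  have hright : star v ⬝ᵥ (P *ᵥ (S *ᵥ v)) = z * (star v ⬝ᵥ (P *ᵥ v)) := by
    rw [hSv, mulVec_smul, dotProduct_smul, smul_eq_mul]
  have hform : ((2 * z.re : ℝ) : ℂ) * (star v ⬝ᵥ (P *ᵥ v)) = -(star v ⬝ᵥ (W *ᵥ v)) := by
    rw [← dotProduct_neg, ← neg_mulVec, ← hSPW, add_mulVec, dotProduct_add, ← mulVec_mulVec,
      ← mulVec_mulVec, hleft, hright, ← add_mul, add_comm, Complex.add_conj]
  have hre := congrArg Complex.re hform
  have hc := hP.re_dotProduct_pos hv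
  have hw := hW.re_dotProduct_pos hv
  simp only [RCLike.re_to_complex, Complex.neg_re, Complex.re_ofReal_mul] at hc hw hre
  nlinarith

theorem exists_mulVec_eq_smul_of_isRoot_charpoly {K : Type*} [Field K] [DecidableEq I]
    {S : Matrix I I K} {z : K} (hz : S.charpoly.IsRoot z) : ∃ v ≠ 0, S *ᵥ v = z • v := by
  rw [Polynomial.IsRoot, eval_charpoly, ← exists_mulVec_eq_zero_iff] at hz
  obtain ⟨v, hv, hSv⟩ := hz
  refine ⟨v, hv, ?_⟩
  rw [sub_mulVec, sub_eq_zero, scalar_apply] at hSv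
  ext i
  simp [← hSv, mulVec_diagonal]

end Lyapunov

section BlockDiagonal

variable {ι R : Type*} [Fintype ι] [DecidableEq ι] {m : ι → Type*} [∀ i, Fintype (m i)]

theorem dotProduct_blockDiagonal'_mulVec [NonUnitalNonAssocSemiring R]
    (M : ∀ i, Matrix (m i) (m i) R) (x y : (Σ i, m i) → R) :
    x ⬝ᵥ (blockDiagonal' M *ᵥ y) = ∑ i, (fun r => x ⟨i, r⟩) ⬝ᵥ (M i *ᵥ fun r => y ⟨i, r⟩) := by
  simp only [dotProduct, mulVec, Fintype.sum_sigma, blockDiagonal'_apply']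
  refine Finset.sum_congr rfl fun i _ => Finset.sum_congr rfl fun r _ => congrArg _ ?_
  rw [Fintype.sum_eq_single i fun j hj => by simp [Ne.symm hj]]
  simp

theorem PosDef.blockDiagonal' [Ring R] [PartialOrder R] [StarRing R] [IsOrderedCancelAddMonoid R]
    {M : ∀ i, Matrix (m i) (m i) R} (hM : ∀ i, (M i).PosDef) : (blockDiagonal' M).PosDef := by
  refine .of_dotProduct_mulVec_pos (isHermitian_blockDiagonal'_iff.mpr fun i => (hM i).1)
    fun x hx => ?_
  obtain ⟨i, hi⟩ : ∃ i, (fun r => x ⟨i, r⟩) ≠ 0 := by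
    by_contra! h
    exact hx (funext fun a => congrFun (h a.1) a.2)
  rw [dotProduct_blockDiagonal'_mulVec]
  exact Finset.sum_pos' (fun j _ => (hM j).posSemidef.dotProduct_mulVec_nonneg _)
    ⟨i, Finset.mem_univ _, (hM i).dotProduct_mulVec_pos hi⟩

theorem blockDiagonal'_nonsing_inv [∀ i, DecidableEq (m i)] [CommRing R]
    {M : ∀ i, Matrix (m i) (m i) R} (hM : ∀ i, IsUnit (M i).det) :
    (blockDiagonal' M)⁻¹ = blockDiagonal' fun i => (M i)⁻¹ := by
  refine inv_eq_left_inv ?_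
  rw [← blockDiagonal'_mul]
  simp_rw [nonsing_inv_mul _ (hM _)]
  exact blockDiagonal'_one

end BlockDiagonal

end Matrix

theorem isHurwitz_of_lyapunov {I : Type*} [Fintype I] [DecidableEq I] {S P W : Matrix I I ℝ}
    (hP : P.PosDef) (hW : W.PosDef) (hSPW : S * P + P * Sᵀ = -W) : IsHurwitz S := by
  intro z hz
  -- an eigenvector of `Sᵀ` is a left eigenvector of `S`, and `(Sᵀ)ᴴ = S` over `ℂ`
  obtain ⟨v, hv, hSv⟩ := exists_mulVec_eq_smul_of_isRoot_charpoly (S := (S.map ((↑) : ℝ → ℂ))ᵀ)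
    (by rwa [charpoly_transpose])
  refine re_lt_zero_of_lyapunov hP.map_ofReal hW.map_ofReal ?_ hv hSv
  have hSPWc := congrArg Complex.ofRealHom.mapMatrix hSPW
  simp only [map_add, map_mul, map_neg, RingHom.mapMatrix_apply] at hSPWc
  have hS : ((S.map ((↑) : ℝ → ℂ))ᵀ)ᴴ = S.map (↑) := by ext; simp
  rw [hS]
  exact hSPWc

theorem closedLoop_mul_add_mul_transpose {I J R : Type*} [Fintype I] [Fintype J] [DecidableEq I]
    [CommRing R] {A P : Matrix I I R} {B : Matrix I J R} {L : Matrix J I R} (hPt : Pᵀ = P)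
    (hP : IsUnit P.det) :
    (A + B * (L * P⁻¹)) * P + P * (A + B * (L * P⁻¹))ᵀ = A * P + P * Aᵀ + B * L + Lᵀ * Bᵀ := by
  rw [transpose_add, transpose_mul, transpose_mul, transpose_nonsing_inv, hPt, add_mul, mul_add,
    ← Matrix.mul_assoc B, nonsing_inv_mul_cancel_right _ _ hP, Matrix.mul_assoc P⁻¹,
    mul_nonsing_inv_cancel_left _ _ hP]
  abel

section Blocks

variable {N : ℕ} {n m p : Fin N → ℕ}

theorem blockDiagMat_eq_blockDiagonal' (D : ∀ i, Matrix (Fin (n i)) (Fin (p i)) ℝ) :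
    blockDiagMat D = blockDiagonal' D := by
  ext ⟨i, r⟩ ⟨j, s⟩
  simp only [blockDiagMat, blockDiagonal'_apply', of_apply]
  split_ifs with h
  · subst h
    rfl
  · rfl

theorem ofBlocks_transpose (F : ∀ i j, Matrix (Fin (n i)) (Fin (m j)) ℝ) :
    (ofBlocks F)ᵀ = ofBlocks fun i j => (F j i)ᵀ := rfl

theorem ofBlocks_add (F G : ∀ i j, Matrix (Fin (n i)) (Fin (m j)) ℝ) :
    ofBlocks F + ofBlocks G = ofBlocks fun i j => F i j + G i j := rfl

theorem ofBlocks_neg (F : ∀ i j, Matrix (Fin (n i)) (Fin (m j)) ℝ) :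
    -ofBlocks F = ofBlocks fun i j => -F i j := rfl

theorem ofBlocks_mul_ofBlocks (F : ∀ i j, Matrix (Fin (n i)) (Fin (m j)) ℝ)
    (G : ∀ i j, Matrix (Fin (m i)) (Fin (p j)) ℝ) :
    ofBlocks F * ofBlocks G = ofBlocks fun i j => ∑ k, F i k * G k j := by
  ext ⟨i, r⟩ ⟨j, s⟩
  simp only [ofBlocks, mul_apply, of_apply, Fintype.sum_sigma, Matrix.sum_apply]

theorem blockDiagonal'_mul_ofBlocks (D : ∀ i, Matrix (Fin (n i)) (Fin (m i)) ℝ)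
    (F : ∀ i j, Matrix (Fin (m i)) (Fin (p j)) ℝ) :
    blockDiagonal' D * ofBlocks F = ofBlocks fun i j => D i * F i j := by
  ext ⟨i, r⟩ ⟨j, s⟩
  simp only [ofBlocks, mul_apply, of_apply, Fintype.sum_sigma, blockDiagonal'_apply']
  rw [Fintype.sum_eq_single i fun k hk => by simp [Ne.symm hk]]
  simp

theorem ofBlocks_mul_blockDiagonal' (F : ∀ i j, Matrix (Fin (n i)) (Fin (m j)) ℝ)
    (D : ∀ i, Matrix (Fin (m i)) (Fin (p i)) ℝ) :
    ofBlocks F * blockDiagonal' D = ofBlocks fun i j => F i j * D j := by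
  ext ⟨i, r⟩ ⟨j, s⟩
  simp only [ofBlocks, mul_apply, of_apply, Fintype.sum_sigma, blockDiagonal'_apply']
  rw [Fintype.sum_eq_single j fun k hk => by simp [hk]]
  simp

theorem det_ofBlocks_eq_one {U : ∀ i j, Matrix (Fin (n i)) (Fin (n j)) ℝ}
    (hU : ∀ i j, j < i → U i j = 0) (hUdiag : ∀ i, U i i = 1) : (ofBlocks U).det = 1 := by
  have htri : (ofBlocks U).BlockTriangular Sigma.fst := fun a b hab => by
    simp [ofBlocks, hU _ _ hab]
  rw [htri.det_fintype]
  refine Finset.prod_eq_one fun k _ => ?_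
  suffices (ofBlocks U).toSquareBlock Sigma.fst k = 1 by rw [this, det_one]
  ext ⟨⟨i, r⟩, hi⟩ ⟨⟨j, s⟩, hj⟩
  dsimp only at hi hj
  subst hi hj
  simp [toSquareBlock_def, ofBlocks, hUdiag, one_apply]

end Blocks

section Cholesky

variable {N : ℕ} {n : Fin N → ℕ} (W : ∀ i j : Fin N, Matrix (Fin (n i)) (Fin (n j)) ℝ)

noncomputable def cholFactor (i k : Fin N) : Matrix (Fin (n i)) (Fin (n k)) ℝ :=
  if k ≤ i then chol W i k * (chol W k k)⁻¹ else 0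

variable {W}

theorem cholFactor_of_lt {i k : Fin N} (hik : i < k) : cholFactor W i k = 0 :=
  if_neg (not_le.mpr hik)

variable (hpiv : ∀ k, (chol W k k).PosDef)
include hpiv

theorem transpose_chol_self (k : Fin N) : (chol W k k)ᵀ = chol W k k := (hpiv k).1.eq

theorem isUnit_det_chol_self (k : Fin N) : IsUnit (chol W k k).det :=
  (isUnit_iff_isUnit_det _).mp (hpiv k).isUnit

theorem cholFactor_self (k : Fin N) : cholFactor W k k = 1 := by
  rw [cholFactor, if_pos le_rfl, mul_nonsing_inv _ (isUnit_det_chol_self hpiv k)]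

theorem cholFactor_mul_chol_mul_transpose {i j k : Fin N} (hki : k ≤ i) (hkj : k ≤ j) :
    cholFactor W i k * chol W k k * (cholFactor W j k)ᵀ =
      chol W i k * (chol W k k)⁻¹ * (chol W j k)ᵀ := by
  rw [cholFactor, cholFactor, if_pos hki, if_pos hkj, transpose_mul, transpose_nonsing_inv,
    transpose_chol_self hpiv, Matrix.mul_assoc (chol W i k),
    nonsing_inv_mul _ (isUnit_det_chol_self hpiv k), Matrix.mul_one, Matrix.mul_assoc]

/-- The `k`-th summand of the recursion for `chol W i j`, plus `chol W i j` itself at `k = j`. -/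
theorem cholFactor_mul_chol_mul_transpose_eq {i j : Fin N} (hji : j ≤ i) (k : Fin N) :
    cholFactor W i k * chol W k k * (cholFactor W j k)ᵀ =
      (if (k : ℕ) < j then chol W i k * (chol W k k)⁻¹ * (chol W j k)ᵀ else 0) +
        if k = j then chol W i j else 0 := by
  rcases lt_trichotomy k j with hkj | rfl | hjk
  · rw [cholFactor_mul_chol_mul_transpose hpiv (hkj.le.trans hji) hkj.le,
      if_pos (Fin.lt_def.mp hkj), if_neg hkj.ne, add_zero]
  · rw [cholFactor_mul_chol_mul_transpose hpiv hji le_rfl, if_neg (lt_irrefl _), if_pos rfl,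
      zero_add, transpose_chol_self hpiv, Matrix.mul_assoc,
      nonsing_inv_mul _ (isUnit_det_chol_self hpiv k), Matrix.mul_one]
  · rw [cholFactor_of_lt hjk, if_neg (not_lt.mpr (Fin.le_def.mp hjk.le)), if_neg hjk.ne',
      transpose_zero, Matrix.mul_zero, add_zero]

theorem eq_sum_cholFactor_of_le {i j : Fin N} (hji : j ≤ i) :
    W i j = ∑ k, cholFactor W i k * chol W k k * (cholFactor W j k)ᵀ := by
  rw [Finset.sum_congr rfl fun k _ => cholFactor_mul_chol_mul_transpose_eq hpiv hji k,
    Finset.sum_add_distrib, Finset.sum_ite_eq' Finset.univ j, if_pos (Finset.mem_univ j)]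
  conv_rhs => rw [chol]
  simp only [dite_eq_ite]
  abel

theorem eq_sum_cholFactor (hsym : ∀ i j, (W i j)ᵀ = W j i) (i j : Fin N) :
    W i j = ∑ k, cholFactor W i k * chol W k k * (cholFactor W j k)ᵀ := by
  rcases le_total j i with hji | hij
  · exact eq_sum_cholFactor_of_le hpiv hji
  · rw [← hsym, eq_sum_cholFactor_of_le hpiv hij, transpose_sum]
    refine Finset.sum_congr rfl fun k _ => ?_
    rw [transpose_mul, transpose_mul, transpose_transpose, transpose_chol_self hpiv,
      Matrix.mul_assoc]

theorem ofBlocks_eq_cholFactor_mul_blockDiagonal'_mul_transpose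
    (hsym : ∀ i j, (W i j)ᵀ = W j i) :
    ofBlocks W = ofBlocks (cholFactor W) * blockDiagonal' (fun k => chol W k k) *
      (ofBlocks (cholFactor W))ᵀ := by
  rw [ofBlocks_mul_blockDiagonal', ofBlocks_transpose, ofBlocks_mul_ofBlocks]
  exact congrArg ofBlocks (funext₂ (eq_sum_cholFactor hpiv hsym))

theorem posDef_ofBlocks_of_posDef_chol (hsym : ∀ i j, (W i j)ᵀ = W j i) :
    (ofBlocks W).PosDef := by
  have hdet : (ofBlocks (cholFactor W)).det = 1 := by
    rw [← det_transpose, ofBlocks_transpose]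
    exact det_ofBlocks_eq_one (fun i j hji => by rw [cholFactor_of_lt hji, transpose_zero])
      (fun i => by rw [cholFactor_self hpiv, transpose_one])
  have hunit : IsUnit (ofBlocks (cholFactor W)) :=
    (isUnit_iff_isUnit_det _).mpr (hdet ▸ isUnit_one)
  rw [ofBlocks_eq_cholFactor_mul_blockDiagonal'_mul_transpose hpiv hsym]
  exact hunit.posDef_star_right_conjugate_iff.mpr (.blockDiagonal' hpiv)

end Cholesky

/-- Decentralized full-state feedback stabilization: if there are symmetric
positive definite `M i` and blocks `L i j` such that all the block Cholesky
pivots of `W i j = −M i ⬝ A j iᵀ − A i j ⬝ M j − L j iᵀ ⬝ B j jᵀ − B i i ⬝ L i j`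
are positive definite, then `A + B K` is Hurwitz, where `B = diag(B i i)` and
`K` has blocks `K i j = L i j ⬝ (M j)⁻¹`. -/
theorem stmt14 {N : ℕ} {n p : Fin N → ℕ}
    (A : ∀ i j : Fin N, Matrix (Fin (n i)) (Fin (n j)) ℝ)
    (Bd : ∀ i : Fin N, Matrix (Fin (n i)) (Fin (p i)) ℝ)
    (M : ∀ i : Fin N, Matrix (Fin (n i)) (Fin (n i)) ℝ)
    (L : ∀ i j : Fin N, Matrix (Fin (p i)) (Fin (n j)) ℝ)
    (hM : ∀ i, (M i).PosDef)
    (hpiv : ∀ i : Fin N,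
      (chol (fun i j =>
        -(M i * (A j i)ᵀ) - A i j * M j - (L j i)ᵀ * (Bd j)ᵀ - Bd i * L i j) i i).PosDef) :
    IsHurwitz
      (ofBlocks A + blockDiagMat Bd * ofBlocks (fun i j => L i j * (M j)⁻¹)) := by
  set W : ∀ i j : Fin N, Matrix (Fin (n i)) (Fin (n j)) ℝ :=
    fun i j => -(M i * (A j i)ᵀ) - A i j * M j - (L j i)ᵀ * (Bd j)ᵀ - Bd i * L i j
  set P := blockDiagonal' M
  have hP : P.PosDef := .blockDiagonal' hM
  have hMt : ∀ i, (M i)ᵀ = M i := fun i => (hM i).1.eq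
  have hPt : Pᵀ = P := by simp only [P, blockDiagonal'_transpose, hMt]
  have hWt : ∀ i j, (W i j)ᵀ = W j i := fun i j => by
    simp only [W, transpose_sub, transpose_neg, transpose_mul, transpose_transpose, hMt]
    abel
  have hK : ofBlocks (fun i j => L i j * (M j)⁻¹) = ofBlocks L * P⁻¹ := by
    rw [blockDiagonal'_nonsing_inv fun i => (isUnit_iff_isUnit_det _).mp (hM i).isUnit,
      ofBlocks_mul_blockDiagonal']
  have hW : ofBlocks W = -(ofBlocks A * P + P * (ofBlocks A)ᵀ + blockDiagonal' Bd * ofBlocks L +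
      (ofBlocks L)ᵀ * (blockDiagonal' Bd)ᵀ) := by
    rw [blockDiagonal'_transpose, ofBlocks_transpose, ofBlocks_transpose,
      ofBlocks_mul_blockDiagonal', blockDiagonal'_mul_ofBlocks, blockDiagonal'_mul_ofBlocks,
      ofBlocks_mul_blockDiagonal', ofBlocks_add, ofBlocks_add, ofBlocks_add, ofBlocks_neg]
    refine congrArg ofBlocks (funext₂ fun i j => ?_)
    simp only [W]
    abel
  refine isHurwitz_of_lyapunov hP (posDef_ofBlocks_of_posDef_chol hpiv hWt) ?_
  rw [hW, neg_neg, blockDiagMat_eq_blockDiagonal', hK]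
  exact closedLoop_mul_add_mul_transpose hPt ((isUnit_iff_isUnit_det _).mp hP.isUnit)
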